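/- The reverse-complement map π ↦ (π^r)^c is a bijection from the set of ordered set partitions of [n] word-avoiding a pattern α to the set of ordered set partitions of [n] word-avoiding the reverse-complement pattern (α^r)^c, and it preserves the number of blocks, the number of word-descents des, and the number of part-descents pdes. -/

import Mathlib

/-- The word of an ordered set partition: concatenate the blocks,
listing the elements of each block in increasing order. -/
def word (π : List (Finset ℕ)) : List ℕ :=
  (π.map (fun B : Finset ℕ => Finset.sort B (· ≤ ·))).flatten

/-- `π` is an ordered set partition of `[n] = {1,…,n}`: a list of nonempty,
pairwise disjoint finsets whose union is `{1,…,n}`. -/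
def IsOSP (n : ℕ) (π : List (Finset ℕ)) : Prop :=
  (∀ B ∈ π, B.Nonempty) ∧ π.Pairwise Disjoint ∧
    π.foldr (· ∪ ·) ∅ = Finset.Icc 1 n

noncomputable def minB (B : Finset ℕ) : ℕ := sInf (B : Set ℕ)
def maxB (B : Finset ℕ) : ℕ := B.sup id

/-- number of descents of a word -/
def desCount (w : List ℕ) : ℕ :=
  ((List.range (w.length - 1)).filter (fun i => w.getD (i + 1) 0 < w.getD i 0)).length

noncomputable def mindes (π : List (Finset ℕ)) : ℕ :=
  ((List.range (π.length - 1)).filter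
    (fun i => minB (π.getD (i + 1) ∅) < minB (π.getD i ∅))).length

def maxdes (π : List (Finset ℕ)) : ℕ :=
  ((List.range (π.length - 1)).filter
    (fun i => maxB (π.getD (i + 1) ∅) < maxB (π.getD i ∅))).length

noncomputable def pdes (π : List (Finset ℕ)) : ℕ :=
  ((List.range (π.length - 1)).filter
    (fun i => maxB (π.getD (i + 1) ∅) < minB (π.getD i ∅))).length

def Avoids12 (w : List ℕ) : Prop :=
  ¬ ∃ i j : ℕ, i < j ∧ j < w.length ∧ w.getD i 0 < w.getD j 0

def Avoids21 (w : List ℕ) : Prop :=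
  ¬ ∃ i j : ℕ, i < j ∧ j < w.length ∧ w.getD j 0 < w.getD i 0

def Avoids123 (w : List ℕ) : Prop :=
  ¬ ∃ i j k : ℕ, i < j ∧ j < k ∧ k < w.length ∧
    w.getD i 0 < w.getD j 0 ∧ w.getD j 0 < w.getD k 0

def Avoids132 (w : List ℕ) : Prop :=
  ¬ ∃ i j k : ℕ, i < j ∧ j < k ∧ k < w.length ∧
    w.getD i 0 < w.getD k 0 ∧ w.getD k 0 < w.getD j 0

def Avoids213 (w : List ℕ) : Prop :=
  ¬ ∃ i j k : ℕ, i < j ∧ j < k ∧ k < w.length ∧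
    w.getD j 0 < w.getD i 0 ∧ w.getD i 0 < w.getD k 0

def Avoids312 (w : List ℕ) : Prop :=
  ¬ ∃ i j k : ℕ, i < j ∧ j < k ∧ k < w.length ∧
    w.getD j 0 < w.getD k 0 ∧ w.getD k 0 < w.getD i 0

def Avoids321 (w : List ℕ) : Prop :=
  ¬ ∃ i j k : ℕ, i < j ∧ j < k ∧ k < w.length ∧
    w.getD k 0 < w.getD j 0 ∧ w.getD j 0 < w.getD i 0

/-- reverse-complement of an ordered set partition of `[n]` -/
def rcomp (n : ℕ) (π : List (Finset ℕ)) : List (Finset ℕ) :=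
  (π.map (fun B => B.image (fun a => n + 1 - a))).reverse

/-- `u` is order isomorphic to `p` (both lists of distinct entries). -/
def OrdIso (u p : List ℕ) : Prop :=
  u.length = p.length ∧ ∀ i j : ℕ, i < u.length → j < u.length →
    (u.getD i 0 < u.getD j 0 ↔ p.getD i 0 < p.getD j 0)

/-- `π` word-avoids the pattern `p`. -/
def WordAvoids (p : List ℕ) (π : List (Finset ℕ)) : Prop :=
  ¬ ∃ u : List ℕ, u.Sublist (word π) ∧ OrdIso u p

/-- reverse-complement of a permutation pattern given as a list of values in `{1,…,m}`. -/
def patRC (p : List ℕ) : List ℕ := (p.map (fun a => p.length + 1 - a)).reverse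

/-!
If `f` is strictly decreasing on the letters of `w`, then `(w.map f).reverse` reverses positions
and values at once, so every comparison between two letters is preserved once positions `i, j`
are traded for `ℓ - 1 - j, ℓ - 1 - i`. With `f a = n + 1 - a` this carries occurrences of `α` to
occurrences of `(α^r)^c`, descents of the word to descents, and part-descents to part-descents;
since the reverse-complement is an involution on ordered set partitions of `[n]`, it is a
bijection.
-/

open List

section ReverseMap

variable {α β : Type*}

lemma length_filter_range_reflect (m : ℕ) {p q : ℕ → Bool}
    (h : ∀ i < m, p i = q (m - 1 - i)) :
    ((range m).filter p).length = ((range m).filter q).length := by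
  have hperm : ((range m).map (fun i => m - 1 - i)).Perm (range m) := by
    simpa [range_eq_range', reverse_range'] using reverse_perm (range m)
  rw [← countP_eq_length_filter, ← countP_eq_length_filter, ← hperm.countP_eq q,
    countP_map]
  exact countP_congr fun i hi => by simp [h i (mem_range.1 hi)]

lemma getD_mem_of_lt {l : List α} {d : α} {i : ℕ} (hi : i < l.length) : l.getD i d ∈ l := by
  rw [getD_eq_getElem _ _ hi]
  exact getElem_mem _

lemma getD_reverse_map (f : α → β) (l : List α) (d : β) (d' : α) {i : ℕ}
    (hi : i < l.length) :
    ((l.map f).reverse).getD i d = f (l.getD (l.length - 1 - i) d') := by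
  rw [getD_eq_getElem _ _ (by simpa using hi), getD_eq_getElem _ _ (by omega),
    getElem_reverse, getElem_map]
  simp

variable {f : ℕ → ℕ} {w : List ℕ}

lemma getD_reverse_map_lt_iff (hf : StrictAntiOn f {a | a ∈ w}) {i j : ℕ}
    (hi : i < w.length) (hj : j < w.length) :
    ((w.map f).reverse).getD i 0 < ((w.map f).reverse).getD j 0 ↔
      w.getD (w.length - 1 - j) 0 < w.getD (w.length - 1 - i) 0 := by
  rw [getD_reverse_map f w 0 0 hi, getD_reverse_map f w 0 0 hj]
  exact hf.lt_iff_gt (getD_mem_of_lt (by omega)) (getD_mem_of_lt (by omega))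

lemma desCount_reverse_map (hf : StrictAntiOn f {a | a ∈ w}) :
    desCount ((w.map f).reverse) = desCount w := by
  unfold desCount
  rw [length_reverse, length_map]
  refine length_filter_range_reflect _ fun i hi => ?_
  rw [decide_eq_decide, getD_reverse_map_lt_iff hf (by omega) (by omega),
    show w.length - 1 - 1 - i + 1 = w.length - 1 - i by omega,
    show w.length - 1 - 1 - i = w.length - 1 - (i + 1) by omega]

lemma forall_reflect_iff {ℓ : ℕ} {P : ℕ → ℕ → Prop} :
    (∀ i j, i < ℓ → j < ℓ → P (ℓ - 1 - j) (ℓ - 1 - i)) ↔ ∀ i j, i < ℓ → j < ℓ → P i j := by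
  refine ⟨fun h i j hi hj => ?_, fun h i j hi hj => h _ _ (by omega) (by omega)⟩
  simpa [show ℓ - 1 - (ℓ - 1 - i) = i by omega, show ℓ - 1 - (ℓ - 1 - j) = j by omega]
    using h (ℓ - 1 - j) (ℓ - 1 - i) (by omega) (by omega)

lemma ordIso_reverse_map_iff {g : ℕ → ℕ} {p : List ℕ} (hf : StrictAntiOn f {a | a ∈ w})
    (hg : StrictAntiOn g {a | a ∈ p}) :
    OrdIso ((w.map f).reverse) ((p.map g).reverse) ↔ OrdIso w p := by
  unfold OrdIso
  rw [length_reverse, length_map, length_reverse, length_map]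
  refine and_congr_right fun hlen => ?_
  calc _ ↔ ∀ i j, i < w.length → j < w.length →
        (w.getD (w.length - 1 - j) 0 < w.getD (w.length - 1 - i) 0 ↔
          p.getD (w.length - 1 - j) 0 < p.getD (w.length - 1 - i) 0) := by
        refine forall₄_congr fun i j hi hj => ?_
        rw [getD_reverse_map_lt_iff hf hi hj, getD_reverse_map_lt_iff hg (by omega) (by omega),
          hlen]
    _ ↔ _ := forall_reflect_iff
        (P := fun i j => (w.getD i 0 < w.getD j 0 ↔ p.getD i 0 < p.getD j 0))

lemma exists_sublist_ordIso_reverse_map_iff {g : ℕ → ℕ} {p : List ℕ}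
    (hf : StrictAntiOn f {a | a ∈ w}) (hg : StrictAntiOn g {a | a ∈ p}) :
    (∃ u, u.Sublist ((w.map f).reverse) ∧ OrdIso u ((p.map g).reverse)) ↔
      ∃ v, v.Sublist w ∧ OrdIso v p := by
  have hf_sub {v : List ℕ} (hv : v.Sublist w) : StrictAntiOn f {a | a ∈ v} :=
    hf.mono fun _ ha => hv.subset ha
  constructor
  · rintro ⟨u, hu, hiso⟩
    obtain ⟨v, hv, huv⟩ := sublist_map_iff.1 (sublist_reverse_iff.1 hu)
    rw [← reverse_reverse u, huv] at hiso
    exact ⟨v, hv, (ordIso_reverse_map_iff (hf_sub hv) hg).1 hiso⟩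
  · rintro ⟨v, hv, hiso⟩
    exact ⟨_, (hv.map f).reverse, (ordIso_reverse_map_iff (hf_sub hv) hg).2 hiso⟩

end ReverseMap

section Blocks

variable {f : ℕ → ℕ}

lemma sort_image_of_strictAntiOn {B : Finset ℕ} (hf : StrictAntiOn f B) :
    Finset.sort (B.image f) (· ≤ ·) = ((Finset.sort B (· ≤ ·)).map f).reverse := by
  have hnd : ((Finset.sort B (· ≤ ·)).map f).reverse.Nodup :=
    nodup_reverse.2 ((Finset.sort_nodup B _).map_on fun a ha b hb =>
      hf.injOn (Finset.mem_sort _ |>.1 ha) (Finset.mem_sort _ |>.1 hb))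
  have hset : ((Finset.sort B (· ≤ ·)).map f).reverse.toFinset = B.image f := by
    ext a
    simp
  rw [← hset]
  refine (toFinset_sort _ hnd).2 (pairwise_reverse.2 (pairwise_map.2 ?_))
  exact (Finset.sortedLT_sort B).pairwise.imp_of_mem fun ha hb hab =>
    (hf (Finset.mem_sort _ |>.1 ha) (Finset.mem_sort _ |>.1 hb) hab).le

lemma word_reverse_map_image {π : List (Finset ℕ)} (hf : ∀ B ∈ π, StrictAntiOn f B) :
    word ((π.map (Finset.image f)).reverse) = ((word π).map f).reverse := by
  simp only [word, map_reverse, flatten_reverse, map_map, map_flatten]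
  congr 2
  refine map_congr_left fun B hB => ?_
  simp [sort_image_of_strictAntiOn (hf B hB)]

lemma mem_word {π : List (Finset ℕ)} {a : ℕ} : a ∈ word π ↔ ∃ B ∈ π, a ∈ B := by
  simp [word]

lemma minB_mem {B : Finset ℕ} (h : B.Nonempty) : minB B ∈ B := by
  exact_mod_cast Nat.sInf_mem (s := (B : Set ℕ)) (by exact_mod_cast h)

lemma minB_le {B : Finset ℕ} {a : ℕ} (h : a ∈ B) : minB B ≤ a :=
  Nat.sInf_le (by exact_mod_cast h)

lemma maxB_mem {B : Finset ℕ} (h : B.Nonempty) : maxB B ∈ B := by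
  obtain ⟨i, hi, he⟩ := Finset.exists_mem_eq_sup B h id
  rw [maxB, he]
  exact hi

lemma le_maxB {B : Finset ℕ} {a : ℕ} (h : a ∈ B) : a ≤ maxB B :=
  Finset.le_sup (f := id) h

lemma minB_image_of_antitoneOn {B : Finset ℕ} (hB : B.Nonempty) (hf : AntitoneOn f B) :
    minB (B.image f) = f (maxB B) := by
  refine le_antisymm (minB_le (Finset.mem_image_of_mem _ (maxB_mem hB))) ?_
  obtain ⟨b, hb, he⟩ := Finset.mem_image.1 (minB_mem (hB.image f))
  rw [← he]
  exact hf hb (maxB_mem hB) (le_maxB hb)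

lemma maxB_image_of_antitoneOn {B : Finset ℕ} (hB : B.Nonempty) (hf : AntitoneOn f B) :
    maxB (B.image f) = f (minB B) := by
  refine le_antisymm ?_ (le_maxB (Finset.mem_image_of_mem _ (minB_mem hB)))
  obtain ⟨b, hb, he⟩ := Finset.mem_image.1 (maxB_mem (hB.image f))
  rw [← he]
  exact hf (minB_mem hB) hb (minB_le hb)

lemma pdes_reverse_map_image {π : List (Finset ℕ)} {s : Set ℕ} (hne : ∀ B ∈ π, B.Nonempty)
    (hs : ∀ B ∈ π, ↑B ⊆ s) (hf : StrictAntiOn f s) :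
    pdes ((π.map (Finset.image f)).reverse) = pdes π := by
  unfold pdes
  rw [length_reverse, length_map]
  refine length_filter_range_reflect _ fun i hi => ?_
  rw [getD_reverse_map _ _ _ ∅ (by omega), getD_reverse_map _ _ _ ∅ (by omega),
    show π.length - 1 - 1 - i + 1 = π.length - 1 - i by omega,
    show π.length - 1 - 1 - i = π.length - 1 - (i + 1) by omega]
  set C := π.getD (π.length - 1 - (i + 1)) ∅
  set D := π.getD (π.length - 1 - i) ∅
  have hC : C ∈ π := getD_mem_of_lt (by omega)
  have hD : D ∈ π := getD_mem_of_lt (by omega)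
  rw [maxB_image_of_antitoneOn (hne C hC) ((hf.mono (hs C hC)).antitoneOn),
    minB_image_of_antitoneOn (hne D hD) ((hf.mono (hs D hD)).antitoneOn), decide_eq_decide]
  exact hf.lt_iff_gt (hs C hC (minB_mem (hne C hC))) (hs D hD (maxB_mem (hne D hD)))

end Blocks

section OrderedSetPartition

variable {n : ℕ} {π : List (Finset ℕ)}

lemma strictAntiOn_succ_sub : StrictAntiOn (fun a => n + 1 - a) (Set.Iic n) :=
  fun a _ b (hb : b ≤ n) hab => show n + 1 - b < n + 1 - a by omega

lemma mem_foldr_union {γ : Type*} [DecidableEq γ] {l : List (Finset γ)} {a : γ} :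
    a ∈ l.foldr (· ∪ ·) ∅ ↔ ∃ B ∈ l, a ∈ B := by
  induction l with
  | nil => simp
  | cons C l ih => simp [ih]

lemma IsOSP.mem_Icc (h : IsOSP n π) {B : Finset ℕ} (hB : B ∈ π) {a : ℕ} (ha : a ∈ B) :
    a ∈ Finset.Icc 1 n :=
  h.2.2 ▸ mem_foldr_union.2 ⟨B, hB, ha⟩

lemma IsOSP.coe_subset_Iic (h : IsOSP n π) {B : Finset ℕ} (hB : B ∈ π) :
    ↑B ⊆ Set.Iic n :=
  fun _ ha => (Finset.mem_Icc.1 (h.mem_Icc hB ha)).2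

lemma isOSP_rcomp (h : IsOSP n π) : IsOSP n (rcomp n π) := by
  refine ⟨?_, ?_, ?_⟩
  · simp only [rcomp, mem_reverse, mem_map]
    rintro _ ⟨C, hC, rfl⟩
    exact (h.1 C hC).image _
  · rw [rcomp, pairwise_reverse, pairwise_map]
    refine h.2.1.imp_of_mem fun hA hB hAB => Finset.disjoint_left.2 ?_
    simp only [Finset.mem_image]
    rintro _ ⟨b, hb, rfl⟩ ⟨a, ha, hab⟩
    have : a ≤ n := h.coe_subset_Iic hA ha
    have : b ≤ n := h.coe_subset_Iic hB hb
    obtain rfl : a = b := by omega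
    exact Finset.disjoint_left.1 hAB ha hb
  · ext a
    simp only [rcomp, mem_foldr_union, mem_reverse, mem_map, Finset.mem_Icc]
    constructor
    · rintro ⟨_, ⟨C, hC, rfl⟩, ha⟩
      obtain ⟨b, hb, rfl⟩ := Finset.mem_image.1 ha
      have := Finset.mem_Icc.1 (h.mem_Icc hC hb)
      omega
    · intro ha
      have : n + 1 - a ∈ Finset.Icc 1 n := Finset.mem_Icc.2 (by omega)
      obtain ⟨C, hC, haC⟩ := mem_foldr_union.1 (h.2.2 ▸ this)
      exact ⟨_, ⟨C, hC, rfl⟩, Finset.mem_image.2 ⟨_, haC, by omega⟩⟩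

lemma rcomp_rcomp (h : IsOSP n π) : rcomp n (rcomp n π) = π := by
  simp only [rcomp, map_reverse, reverse_reverse, map_map]
  refine (map_congr_left fun B hB => ?_).trans (map_id π)
  rw [Function.comp_apply, Finset.image_image, id]
  refine (Finset.image_congr fun a ha => ?_).trans Finset.image_id
  have : a ≤ n := h.coe_subset_Iic hB ha
  simp only [Function.comp_apply, id]
  omega

lemma IsOSP.word_rcomp (h : IsOSP n π) :
    word (rcomp n π) = ((word π).map (fun a => n + 1 - a)).reverse :=
  word_reverse_map_image fun _ hB => strictAntiOn_succ_sub.mono (h.coe_subset_Iic hB)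

lemma IsOSP.word_subset_Iic (h : IsOSP n π) : {a | a ∈ word π} ⊆ Set.Iic n := fun a ha => by
  obtain ⟨B, hB, haB⟩ := mem_word.1 ha
  exact h.coe_subset_Iic hB haB

lemma IsOSP.wordAvoids_rcomp_iff (h : IsOSP n π) {α : List ℕ} (hα : ∀ a ∈ α, a ≤ α.length) :
    WordAvoids (patRC α) (rcomp n π) ↔ WordAvoids α π := by
  unfold WordAvoids patRC
  rw [h.word_rcomp]
  exact not_congr (exists_sublist_ordIso_reverse_map_iff
    (strictAntiOn_succ_sub.mono h.word_subset_Iic) (strictAntiOn_succ_sub.mono hα))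

end OrderedSetPartition

theorem stmt4_general (n : ℕ) (α : List ℕ)
    (hval : ∀ a ∈ α, 1 ≤ a ∧ a ≤ α.length) :
    Set.BijOn (rcomp n) {π | IsOSP n π ∧ WordAvoids α π}
      {π | IsOSP n π ∧ WordAvoids (patRC α) π} ∧
    (∀ π : List (Finset ℕ), IsOSP n π →
      (rcomp n π).length = π.length ∧
      desCount (word (rcomp n π)) = desCount (word π) ∧
      pdes (rcomp n π) = pdes π) := by
  have hα : ∀ a ∈ α, a ≤ α.length := fun a ha => (hval a ha).2
  refine ⟨Set.InvOn.bijOn ⟨fun π hπ => rcomp_rcomp hπ.1, fun π hπ => rcomp_rcomp hπ.1⟩ ?_ ?_,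
    fun π hπ => ⟨by simp [rcomp], ?_, ?_⟩⟩
  · exact fun π ⟨hπ, hav⟩ => ⟨isOSP_rcomp hπ, (hπ.wordAvoids_rcomp_iff hα).2 hav⟩
  · rintro τ ⟨hτ, hav⟩
    refine ⟨isOSP_rcomp hτ, ?_⟩
    rwa [← (isOSP_rcomp hτ).wordAvoids_rcomp_iff hα, rcomp_rcomp hτ]
  · rw [hπ.word_rcomp]
    exact desCount_reverse_map (strictAntiOn_succ_sub.mono hπ.word_subset_Iic)
  · exact pdes_reverse_map_image hπ.1 (fun _ => hπ.coe_subset_Iic) strictAntiOn_succ_sub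

theorem stmt4 (n : ℕ) (α : List ℕ) (hnd : α.Nodup)
    (hval : ∀ a ∈ α, 1 ≤ a ∧ a ≤ α.length) :
    Set.BijOn (rcomp n) {π | IsOSP n π ∧ WordAvoids α π}
      {π | IsOSP n π ∧ WordAvoids (patRC α) π} ∧
    (∀ π : List (Finset ℕ), IsOSP n π →
      (rcomp n π).length = π.length ∧
      desCount (word (rcomp n π)) = desCount (word π) ∧
      pdes (rcomp n π) = pdes π) :=
  stmt4_general n α hval
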